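/- arXiv:1911.09663 — 3 statements merged into one kernel-verified Lean document; each statement's English description precedes it below -/
import Mathlib

section
/- Let x, y, x', y' be real numbers with (x,y) and (x',y') both in the blunt square S_b = [-1,1]² \ {-1,1}² (i.e., |x|,|y|,|x'|,|y'| ≤ 1 and not both |x|=1 and |y|=1, and not both |x'|=1 and |y'|=1). Then xx' + xy' + yx' - yy' < 2. -/
/-!
Write the CHSH expression as `x (x' + y') + y (x' - y')`. Since `|x|, |y| ≤ 1` it is at most
`|x' + y'| + |x' - y'| = 2 max (|x'|, |y'|) ≤ 2`. If `|x'| = |y'|`, then `(x', y')` is not a corner,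
so `max (|x'|, |y'|) < 1` and the bound is already strict. Otherwise `x' + y'` and `x' - y'` are both
nonzero, and since `(x, y)` is not a corner, `|x| < 1` or `|y| < 1` makes one of the two
coefficient bounds strict.
-/

lemma abs_add_add_abs_sub_le {a b r : ℝ} (ha : |a| ≤ r) (hb : |b| ≤ r) :
    |a + b| + |a - b| ≤ 2 * r := by
  rw [abs_le] at ha hb
  rcases abs_cases (a + b) with ⟨hp, -⟩ | ⟨hp, -⟩ <;>
    rcases abs_cases (a - b) with ⟨hm, -⟩ | ⟨hm, -⟩ <;> linarith

lemma mul_le_abs_of_abs_le_one {a : ℝ} (ha : |a| ≤ 1) (c : ℝ) : a * c ≤ |c| :=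
  calc a * c ≤ |a| * |c| := by rw [← abs_mul]; exact le_abs_self _
    _ ≤ |c| := mul_le_of_le_one_left (abs_nonneg c) ha

lemma mul_lt_abs_of_abs_lt_one {a c : ℝ} (ha : |a| < 1) (hc : c ≠ 0) : a * c < |c| :=
  calc a * c ≤ |a| * |c| := by rw [← abs_mul]; exact le_abs_self _
    _ < |c| := mul_lt_of_lt_one_left (abs_pos.2 hc) ha

theorem blunt_square_CHSH (x y x' y' : ℝ)
    (hx : |x| ≤ 1) (hy : |y| ≤ 1) (hx' : |x'| ≤ 1) (hy' : |y'| ≤ 1)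
    (h1 : ¬ (|x| = 1 ∧ |y| = 1)) (h2 : ¬ (|x'| = 1 ∧ |y'| = 1)) :
    x * x' + x * y' + y * x' - y * y' < 2 := by
  rw [show x * x' + x * y' + y * x' - y * y' = x * (x' + y') + y * (x' - y') by ring]
  have hxc := mul_le_abs_of_abs_le_one hx (x' + y')
  have hyc := mul_le_abs_of_abs_le_one hy (x' - y')
  rcases eq_or_ne |x'| |y'| with hdiag | hoff
  · have hx'_lt : |x'| < 1 := hx'.lt_of_ne fun h ↦ h2 ⟨h, hdiag ▸ h⟩
    linarith [abs_add_add_abs_sub_le le_rfl hdiag.ge]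
  · have hsum : x' + y' ≠ 0 := fun h ↦ hoff (by rw [eq_neg_of_add_eq_zero_left h, abs_neg])
    have hdiff : x' - y' ≠ 0 := fun h ↦ hoff (by rw [sub_eq_zero.1 h])
    have hbound := abs_add_add_abs_sub_le hx' hy'
    rcases hx.lt_or_eq with hx_lt | hx_eq
    · linarith [mul_lt_abs_of_abs_lt_one hx_lt hsum]
    · have hy_lt : |y| < 1 := hy.lt_of_ne fun h ↦ h1 ⟨hx_eq, h⟩
      linarith [mul_lt_abs_of_abs_lt_one hy_lt hdiff]
end

section
/- For α, β ∈ ℝ⁴, let Tᵢ ∈ ℝ³ and Uᵢ ∈ ℝ³ be the rescaled kite generators (Tᵢ = cᵢ(α)tᵢ(α), Uᵢ = cᵢ(β)tᵢ(β) as in the kite construction), and let ω = T₁⊗U₂ - T₂⊗U₂ + T₂⊗U₁ + T₃⊗U₃ ∈ ℝ³⊗ℝ³ viewed as a 3×3 matrix. With f(m) = m₁₁+m₁₂+m₂₁-m₂₂-2m₃₃ and R(γ) = (γ₁γ₂-1)(γ₃-γ₄) - (γ₃γ₄-1)(γ₁-γ₂), one has f(ω) = -R(α)·R(β). -/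
noncomputable section

/-- The rescaled generators of the cone over the kite `Q_γ`. -/
def kiteT (γ : Fin 4 → ℝ) : Fin 4 → Fin 3 → ℝ :=
  ![(2 + γ 1 + γ 3 + γ 2 * (γ 1 - γ 3)) • ![1, γ 0, 1],
    (2 + γ 0 + γ 2 + γ 3 * (γ 0 - γ 2)) • ![γ 1, 1, 1],
    (2 - γ 3 - γ 1 + γ 0 * (γ 3 - γ 1)) • ![-1, γ 2, 1],
    (2 - γ 2 - γ 0 + γ 1 * (γ 2 - γ 0)) • ![γ 3, -1, 1]]

/-- The functional `f` on 3×3 matrices. -/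
def fCHSH (m : Matrix (Fin 3) (Fin 3) ℝ) : ℝ :=
  m 0 0 + m 0 1 + m 1 0 - m 1 1 - 2 * m 2 2

/-- The quantity `R(γ)`. -/
def Rkite (γ : Fin 4 → ℝ) : ℝ :=
  (γ 0 * γ 1 - 1) * (γ 2 - γ 3) - (γ 2 * γ 3 - 1) * (γ 0 - γ 1)

theorem f_omega_eq_neg_R_mul_R (α β : Fin 4 → ℝ)
    (ω : Matrix (Fin 3) (Fin 3) ℝ)
    (hω : ∀ i j, ω i j =
      kiteT α 0 i * kiteT β 1 j - kiteT α 1 i * kiteT β 1 j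
        + kiteT α 1 i * kiteT β 0 j + kiteT α 2 i * kiteT β 2 j) :
    fCHSH ω = -(Rkite α * Rkite β) := by
  simp only [fCHSH, hω, kiteT, Rkite, Pi.smul_apply, smul_eq_mul, Matrix.cons_val]
  ring

end
end

section
/- Let F ⊂ ℝⁿ be a convex set and x ∈ ℝⁿ a point not in the affine hull of F. Then the relative interior of conv(F ∪ {x}) equals { λx + (1-λ)y : y ∈ relint(F), λ ∈ (0,1) }. -/
/-!
Fix an affine function `h` vanishing on `aff F` with `h x = 1`. Off the hyperplane `{h = 1}`,
each point `w` of `aff (F ∪ {x})` is `lineMap p x (h w)`, where `p ∈ aff F` is the central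
projection of `w` from `x`, and `w` lies in the pyramid iff `p ∈ F` and `h w ∈ [0, 1]`. The maps
`w ↦ (p, h w)` and `(p, l) ↦ lineMap p x l` are continuous and mutually inverse there, so
relative neighbourhoods in the pyramid correspond to those in `F × (0, 1)`; the apex and the
base are excluded because moving along the segment through `x` changes the height.
-/

open Set Filter Topology AffineMap

theorem mem_intrinsicInterior_iff_mem_nhdsWithin {𝕜 V P : Type*} [Ring 𝕜] [AddCommGroup V]
    [Module 𝕜 V] [TopologicalSpace P] [AddTorsor V P] {s : Set P} {z : P} :
    z ∈ intrinsicInterior 𝕜 s ↔ z ∈ affineSpan 𝕜 s ∧ s ∈ 𝓝[affineSpan 𝕜 s] z := by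
  constructor
  · rintro ⟨y, hy, rfl⟩
    exact ⟨y.2, preimage_coe_mem_nhds_subtype.1 (mem_interior_iff_mem_nhds.1 hy)⟩
  · rintro ⟨hz, hs⟩
    exact ⟨⟨z, hz⟩, mem_interior_iff_mem_nhds.2 (preimage_coe_mem_nhds_subtype.2 hs), rfl⟩

section CentralProjection

variable {𝕜 E : Type*} [Field 𝕜] [AddCommGroup E] [Module 𝕜 E] {h : E →ᵃ[𝕜] 𝕜} {x y w : E}

def centralProjection (h : E →ᵃ[𝕜] 𝕜) (x w : E) : E := lineMap x w (1 - h w)⁻¹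

theorem apply_lineMap_of_eq_zero_of_eq_one (hy : h y = 0) (hx : h x = 1) (l : 𝕜) :
    h (lineMap y x l) = l := by
  simp [apply_lineMap, hy, hx, lineMap_apply_ring]

theorem apply_centralProjection (hx : h x = 1) (hw : h w ≠ 1) :
    h (centralProjection h x w) = 0 := by
  have : 1 - h w ≠ 0 := sub_ne_zero.2 (Ne.symm hw)
  rw [centralProjection, apply_lineMap, hx, lineMap_apply_ring']
  field_simp
  ring

theorem lineMap_centralProjection (hw : h w ≠ 1) :
    lineMap (centralProjection h x w) x (h w) = w := by
  have : 1 - h w ≠ 0 := sub_ne_zero.2 (Ne.symm hw)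
  simp only [centralProjection, lineMap_apply_module]
  match_scalars
  · field_simp
    ring
  · field_simp

theorem centralProjection_lineMap (hy : h y = 0) (hx : h x = 1) {l : 𝕜} (hl : l ≠ 1) :
    centralProjection h x (lineMap y x l) = y := by
  have : 1 - l ≠ 0 := sub_ne_zero.2 (Ne.symm hl)
  rw [centralProjection, apply_lineMap_of_eq_zero_of_eq_one hy hx]
  simp only [lineMap_apply_module]
  match_scalars
  · field_simp
    ring
  · field_simp

theorem AffineSubspace.mem_of_mem_affineSpan_insert_of_apply_eq_zero {A : AffineSubspace 𝕜 E}
    (hA : ∀ p ∈ A, h p = 0) (hx : h x ≠ 0) (hw : w ∈ affineSpan 𝕜 (insert x (A : Set E)))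
    (hw0 : h w = 0) : w ∈ A := by
  rcases (A : Set E).eq_empty_or_nonempty with hAe | ⟨a, ha⟩
  · rw [hAe, insert_empty_eq, AffineSubspace.mem_affineSpan_singleton] at hw
    exact absurd (hw ▸ hw0) hx
  obtain ⟨r, p, hp, rfl⟩ := (AffineSubspace.mem_affineSpan_insert_iff ha x w).1 hw
  rw [h.map_vadd, h.linear.map_smul, h.linearMap_vsub, hA p hp, hA a ha] at hw0
  have hr : r = 0 := by simpa [hx] using hw0
  simpa [hr] using hp

theorem centralProjection_mem_affineSpan {s : Set E} (hs : ∀ p ∈ affineSpan 𝕜 s, h p = 0)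
    (hx : h x = 1) (hw : w ∈ affineSpan 𝕜 (insert x s)) (hw1 : h w ≠ 1) :
    centralProjection h x w ∈ affineSpan 𝕜 s := by
  rw [← affineSpan_insert_affineSpan] at hw
  refine AffineSubspace.mem_of_mem_affineSpan_insert_of_apply_eq_zero hs
    (by simp [hx] : h x ≠ 0) ?_ (apply_centralProjection hx hw1)
  exact AffineMap.lineMap_mem _ (mem_affineSpan 𝕜 (mem_insert x _)) hw

theorem AffineSubspace.exists_affineMap_eq_zero_and_eq_one_of_notMem {A : AffineSubspace 𝕜 E}
    (hx : x ∉ A) :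
    ∃ h : E →ᵃ[𝕜] 𝕜, (∀ p ∈ A, h p = 0) ∧ h x = 1 := by
  rcases (A : Set E).eq_empty_or_nonempty with hA | ⟨a, ha⟩
  · exact ⟨AffineMap.const 𝕜 E 1, fun p hp => by simp [← SetLike.mem_coe, hA] at hp, rfl⟩
  obtain ⟨f, hfx, hAf⟩ := Submodule.exists_le_ker_of_notMem
    (mt (AffineSubspace.vsub_right_mem_direction_iff_mem ha x).1 hx)
  refine ⟨(f (x -ᵥ a))⁻¹ • (f.toAffineMap - AffineMap.const 𝕜 E (f a)), fun p hp => ?_, ?_⟩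
  · have := hAf ((AffineSubspace.vsub_right_mem_direction_iff_mem ha p).2 hp)
    simp_all [sub_eq_zero]
  · rw [vsub_eq_sub, map_sub] at hfx
    simp [hfx]

end CentralProjection

section Convex

variable {E : Type*} [AddCommGroup E] [Module ℝ E] {F : Set E} {h : E →ᵃ[ℝ] ℝ} {x w : E}

theorem mem_convexHull_insert_iff_exists_lineMap (hF : Convex ℝ F) (hFne : F.Nonempty) :
    w ∈ convexHull ℝ (insert x F) ↔ ∃ y ∈ F, ∃ l ∈ Icc (0 : ℝ) 1, lineMap y x l = w := by
  simp only [convexHull_insert hFne, hF.convexHull_eq, convexJoin_singleton_left, mem_iUnion,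
    exists_prop, segment_symm ℝ x, segment_eq_image_lineMap, mem_image]

theorem apply_mem_Icc_of_mem_convexHull_insert (hF : ∀ p ∈ F, h p = 0) (hx : h x = 1)
    (hw : w ∈ convexHull ℝ (insert x F)) : h w ∈ Icc (0 : ℝ) 1 :=
  convexHull_min (insert_subset_iff.2 ⟨by simp [hx], fun p hp => by simp [hF p hp]⟩)
    ((convex_Icc 0 1).affine_preimage h) hw

theorem centralProjection_mem_of_mem_convexHull_insert (hF : Convex ℝ F) (hFne : F.Nonempty)
    (hFh : ∀ p ∈ F, h p = 0) (hx : h x = 1) (hw : w ∈ convexHull ℝ (insert x F))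
    (hw1 : h w ≠ 1) : centralProjection h x w ∈ F := by
  obtain ⟨y, hy, l, -, rfl⟩ := (mem_convexHull_insert_iff_exists_lineMap hF hFne).1 hw
  rw [apply_lineMap_of_eq_zero_of_eq_one (hFh y hy) hx] at hw1
  rwa [centralProjection_lineMap (hFh y hy) hx hw1]

end Convex

section Topology

variable {E : Type*} [AddCommGroup E] [Module ℝ E] [TopologicalSpace E] [IsTopologicalAddGroup E]
  [ContinuousSMul ℝ E] {F : Set E} {h : E →ᵃ[ℝ] ℝ} {x y w : E}

theorem continuousAt_centralProjection (hh : Continuous h) (hw : h w ≠ 1) :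
    ContinuousAt (centralProjection h x) w :=
  continuousAt_const.lineMap continuousAt_id
    ((continuousAt_const.sub hh.continuousAt).inv₀ (sub_ne_zero.2 (Ne.symm hw)))

theorem lineMap_mem_intrinsicInterior_convexHull_insert (hh : Continuous h)
    (hFh : ∀ p ∈ affineSpan ℝ F, h p = 0) (hx : h x = 1) (hy : y ∈ intrinsicInterior ℝ F)
    {l : ℝ} (hl : l ∈ Ioo 0 1) :
    lineMap y x l ∈ intrinsicInterior ℝ (convexHull ℝ (insert x F)) := by
  rw [mem_intrinsicInterior_iff_mem_nhdsWithin] at hy ⊢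
  rw [affineSpan_convexHull]
  obtain ⟨hyA, hF⟩ := hy
  have hyS : y ∈ affineSpan ℝ (insert x F) := affineSpan_mono ℝ (subset_insert x F) hyA
  have hxS : x ∈ affineSpan ℝ (insert x F) := mem_affineSpan ℝ (mem_insert x F)
  have hz : h (lineMap y x l) = l := apply_lineMap_of_eq_zero_of_eq_one (hFh y hyA) hx l
  refine ⟨AffineMap.lineMap_mem l hyS hxS, ?_⟩
  have hheight : ∀ᶠ w in 𝓝[affineSpan ℝ (insert x F)] lineMap y x l, h w ∈ Ioo 0 1 :=
    nhdsWithin_le_nhds <|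
      hh.continuousAt.preimage_mem_nhds (by rw [hz]; exact isOpen_Ioo.mem_nhds hl)
  have hproj : Tendsto (centralProjection h x) (𝓝[affineSpan ℝ (insert x F)] lineMap y x l)
      (𝓝[affineSpan ℝ F] y) := by
    refine tendsto_nhdsWithin_of_tendsto_nhds_of_eventually_within _ ?_ ?_
    · have := (continuousAt_centralProjection (x := x) hh (hz ▸ hl.2.ne)).tendsto
      rw [centralProjection_lineMap (hFh y hyA) hx hl.2.ne] at this
      exact this.mono_left nhdsWithin_le_nhds
    · filter_upwards [hheight, self_mem_nhdsWithin] with w hw hwS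
      exact centralProjection_mem_affineSpan hFh hx hwS hw.2.ne
  filter_upwards [hheight, hproj hF] with w hw hwF
  rw [← lineMap_centralProjection (x := x) hw.2.ne]
  exact (convex_convexHull ℝ _).lineMap_mem
    (subset_convexHull ℝ (insert x F) (mem_insert_of_mem x hwF))
    (subset_convexHull ℝ (insert x F) (mem_insert x F)) ⟨hw.1.le, hw.2.le⟩

theorem exists_lineMap_eq_of_mem_intrinsicInterior_convexHull_insert
    (hF : Convex ℝ F) (hFne : F.Nonempty) (hFh : ∀ p ∈ affineSpan ℝ F, h p = 0) (hx : h x = 1)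
    (hw : w ∈ intrinsicInterior ℝ (convexHull ℝ (insert x F))) :
    ∃ y ∈ intrinsicInterior ℝ F, ∃ l ∈ Ioo (0 : ℝ) 1, lineMap y x l = w := by
  rw [mem_intrinsicInterior_iff_mem_nhdsWithin, affineSpan_convexHull] at hw
  obtain ⟨hwS, hC⟩ := hw
  have hFh' : ∀ p ∈ F, h p = 0 := fun p hp => hFh p (subset_affineSpan ℝ F hp)
  obtain ⟨y, hyF, l, -, rfl⟩ :=
    (mem_convexHull_insert_iff_exists_lineMap hF hFne).1 (mem_of_mem_nhdsWithin hwS hC)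
  have hyA : y ∈ affineSpan ℝ F := subset_affineSpan ℝ F hyF
  have hxS : x ∈ affineSpan ℝ (insert x F) := mem_affineSpan ℝ (mem_insert x F)
  have hl : l ∈ Ioo (0 : ℝ) 1 := by
    have hline : Tendsto (lineMap y x) (𝓝 l) (𝓝[affineSpan ℝ (insert x F)] lineMap y x l) :=
      tendsto_nhdsWithin_of_tendsto_nhds_of_eventually_within _
        ((continuous_const.lineMap continuous_const continuous_id).tendsto l)
        (Eventually.of_forall fun t =>
          AffineMap.lineMap_mem t (affineSpan_mono ℝ (subset_insert x F) hyA) hxS)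
    rw [← interior_Icc]
    refine mem_interior_iff_mem_nhds.2 (mem_of_superset (hline hC) fun t ht => ?_)
    simpa [apply_lineMap_of_eq_zero_of_eq_one (hFh' y hyF) hx] using
      apply_mem_Icc_of_mem_convexHull_insert hFh' hx ht
  refine ⟨y, ?_, l, hl, rfl⟩
  rw [mem_intrinsicInterior_iff_mem_nhdsWithin]
  refine ⟨hyA, ?_⟩
  have hcone : Tendsto (fun y' => lineMap y' x l) (𝓝[affineSpan ℝ F] y)
      (𝓝[affineSpan ℝ (insert x F)] lineMap y x l) :=
    tendsto_nhdsWithin_of_tendsto_nhds_of_eventually_within _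
      ((continuous_id.lineMap continuous_const continuous_const).tendsto y |>.mono_left
        nhdsWithin_le_nhds)
      (eventually_mem_nhdsWithin.mono fun y' hy' =>
        AffineMap.lineMap_mem l (affineSpan_mono ℝ (subset_insert x F) hy') hxS)
  filter_upwards [hcone hC, self_mem_nhdsWithin] with y' hy'C hy'A
  have hl' : h (lineMap y' x l) ≠ 1 := by
    rw [apply_lineMap_of_eq_zero_of_eq_one (hFh y' hy'A) hx]; exact hl.2.ne
  simpa [centralProjection_lineMap (hFh y' hy'A) hx hl.2.ne] using
    centralProjection_mem_of_mem_convexHull_insert hF hFne hFh' hx hy'C hl'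

theorem intrinsicInterior_convexHull_insert (hh : Continuous h) (hF : Convex ℝ F)
    (hFne : F.Nonempty) (hFh : ∀ p ∈ affineSpan ℝ F, h p = 0) (hx : h x = 1) :
    intrinsicInterior ℝ (convexHull ℝ (insert x F)) =
      image2 (fun y l => lineMap y x l) (intrinsicInterior ℝ F) (Ioo (0 : ℝ) 1) := by
  refine Set.ext fun w => ⟨fun hw => ?_, ?_⟩
  · obtain ⟨y, hy, l, hl, rfl⟩ :=
      exists_lineMap_eq_of_mem_intrinsicInterior_convexHull_insert hF hFne hFh hx hw
    exact mem_image2_of_mem hy hl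
  · rintro ⟨y, hy, l, hl, rfl⟩
    exact lineMap_mem_intrinsicInterior_convexHull_insert hh hFh hx hy hl

end Topology

theorem intrinsicInterior_pyramid {n : ℕ}
    (F : Set (EuclideanSpace ℝ (Fin n))) (hF : Convex ℝ F) (hFne : F.Nonempty)
    (x : EuclideanSpace ℝ (Fin n)) (hx : x ∉ affineSpan ℝ F) :
    intrinsicInterior ℝ (convexHull ℝ (F ∪ {x}))
      = {z | ∃ y ∈ intrinsicInterior ℝ F, ∃ l : ℝ, l ∈ Set.Ioo (0:ℝ) 1 ∧
          z = l • x + (1 - l) • y} := by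
  obtain ⟨h, hFh, hx1⟩ := AffineSubspace.exists_affineMap_eq_zero_and_eq_one_of_notMem hx
  have hh : Continuous h :=
    AffineMap.continuous_linear_iff.1 h.linear.continuous_of_finiteDimensional
  rw [union_singleton, intrinsicInterior_convexHull_insert hh hF hFne hFh hx1]
  ext z
  simp only [mem_image2, mem_ofPred_eq]
  refine exists_congr fun y => and_congr_right fun _ =>
    exists_congr fun l => and_congr_right fun _ => ?_
  rw [lineMap_apply_module, add_comm, eq_comm]
end
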